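/- arXiv:1301.4722 — 3 statements merged into one kernel-verified Lean document; each statement's English description precedes it below -/
import Mathlib

section
/- In the basilica group B = ⟨a,b⟩ acting self-similarly on X = {x,y}, the abelianization B/[B,B] is isomorphic to Z² via an isomorphism sending the class of a to (1,0) and the class of b to (0,1). -/
/-- The substitution `σ` on the free group on two generators `a, b`, replacing
`a ↦ b²` and `b ↦ a` (hence `a⁻¹ ↦ b⁻²`, `b⁻¹ ↦ a⁻¹`). -/
def basilicaSigma : Monoid.End (FreeGroup (Fin 2)) :=
  FreeGroup.lift (fun i => if i = 0 then FreeGroup.of 1 * FreeGroup.of 1 else FreeGroup.of 0)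

/-- The relator `[a, b⁻¹ab] = a⁻¹(b⁻¹ab)⁻¹a(b⁻¹ab)`. -/
def basilicaRelator : FreeGroup (Fin 2) :=
  (FreeGroup.of 0)⁻¹ * ((FreeGroup.of 1)⁻¹ * FreeGroup.of 0 * FreeGroup.of 1)⁻¹ *
    FreeGroup.of 0 * ((FreeGroup.of 1)⁻¹ * FreeGroup.of 0 * FreeGroup.of 1)

/-- The relations `σ^n([a, b⁻¹ab])`, `n ∈ ℕ`, of the Bartholdi–Virág presentation of
the basilica group. -/
def basilicaRels : Set (FreeGroup (Fin 2)) :=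
  {x | ∃ n : ℕ, x = (basilicaSigma ^ n) basilicaRelator}

/-- The basilica group via its presentation
`B = ⟨a, b : σ^n([a, b⁻¹ab]) = e for all n⟩`. -/
def BasilicaGroup : Type := PresentedGroup basilicaRels

noncomputable instance : Group BasilicaGroup := by unfold BasilicaGroup; infer_instance

/-!
Each relator `σⁿ([a, b⁻¹ab])` is the image under the endomorphism `σⁿ` of a commutator, so it
lies in the commutator subgroup of the free group `F(a, b)`. Hence the relations vanish in the
abelianization, which is therefore that of `F(a, b)`, i.e. the free abelian group `ℤ²` on the
classes of `a` and `b`.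
-/

open scoped commutatorElement

namespace PresentedGroup

variable {α : Type*} {rels : Set (FreeGroup α)}

noncomputable def abelianizationEquivOfSubsetCommutator (h : rels ⊆ commutator (FreeGroup α)) :
    Abelianization (PresentedGroup rels) ≃* Abelianization (FreeGroup α) :=
  MonoidHom.toMulEquiv
    (Abelianization.lift <| QuotientGroup.lift _ Abelianization.of <|
      Subgroup.normalClosure_le_normal <| by rwa [Abelianization.ker_of])
    (Abelianization.map (mk rels))
    (Abelianization.hom_ext _ _ <| PresentedGroup.ext fun _ => rfl)
    (Abelianization.hom_ext _ _ <| FreeGroup.ext_hom _ _ fun _ => rfl)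

end PresentedGroup

namespace FreeAbelianGroup

noncomputable def finTwoEquiv : FreeAbelianGroup (Fin 2) ≃+ ℤ × ℤ :=
  (equivFinsupp _).trans <|
    (Finsupp.linearEquivFunOnFinite ℤ ℤ _).toAddEquiv.trans (LinearEquiv.finTwoArrow ℤ ℤ).toAddEquiv

@[simp]
theorem finTwoEquiv_of_zero : finTwoEquiv (of 0) = (1, 0) := by
  simp [finTwoEquiv]

@[simp]
theorem finTwoEquiv_of_one : finTwoEquiv (of 1) = (0, 1) := by
  simp [finTwoEquiv]

end FreeAbelianGroup

theorem basilicaRelator_eq_commutatorElement :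
    basilicaRelator =
      ⁅(FreeGroup.of (0 : Fin 2))⁻¹, ((FreeGroup.of 1)⁻¹ * FreeGroup.of 0 * FreeGroup.of 1)⁻¹⁆ := by
  simp only [basilicaRelator, commutatorElement_def, inv_inv]

theorem basilicaRels_subset_commutator : basilicaRels ⊆ commutator (FreeGroup (Fin 2)) := by
  rintro _ ⟨n, rfl⟩
  rw [basilicaRelator_eq_commutatorElement, map_commutatorElement]
  exact Subgroup.commutator_mem_commutator (Subgroup.mem_top _) (Subgroup.mem_top _)

/-- The abelianization of the basilica group `B = ⟨a,b⟩` is isomorphic to `ℤ²`, via an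
isomorphism sending the class of `a` to `(1,0)` and the class of `b` to `(0,1)`. -/
theorem basilica_abelianization :
    ∃ φ : Abelianization BasilicaGroup ≃* Multiplicative (ℤ × ℤ),
      φ (Abelianization.of (PresentedGroup.of (0 : Fin 2))) = Multiplicative.ofAdd (1, 0) ∧
      φ (Abelianization.of (PresentedGroup.of (1 : Fin 2))) = Multiplicative.ofAdd (0, 1) :=
  -- `FreeAbelianGroup.of x` is by definition the class of `FreeGroup.of x` in the abelianization.
  ⟨(PresentedGroup.abelianizationEquivOfSubsetCommutator basilicaRels_subset_commutator).trans
      (AddEquiv.toMultiplicative FreeAbelianGroup.finTwoEquiv),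
    congrArg Multiplicative.ofAdd FreeAbelianGroup.finTwoEquiv_of_zero,
    congrArg Multiplicative.ofAdd FreeAbelianGroup.finTwoEquiv_of_one⟩
end

section
/- For a self-similar action (G,X) and g ∈ G \ {e}, let F_g^k = { v ∈ X^k : g·v = v and g|_v = e }. Then the sequence |X|^{-k}|F_g^k| is nondecreasing in k and converges to a limit c_g with 0 ≤ c_g < 1. -/
/-- A self-similar action of a group `G` on words over an alphabet `X`:
`act` is the (faithful) action on finite words, `actX` the induced action on letters,
and `res` the restriction map, satisfying `g · (x w) = (g · x)(g|ₓ · w)`. -/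
structure SelfSimilarAction (G : Type*) (X : Type*) [Group G] where
  act : G → List X → List X
  actX : G → X → X
  res : G → X → G
  act_nil : ∀ g, act g [] = []
  act_cons : ∀ g x w, act g (x :: w) = actX g x :: act (res g x) w
  one_act : ∀ w, act 1 w = w
  mul_act : ∀ g h w, act (g * h) w = act g (act h w)
  faithful : ∀ g h : G, (∀ w, act g w = act h w) → g = h

namespace SelfSimilarAction

variable {G X : Type*} [Group G]

/-- The restriction of `g` to a word, `g|_v`. -/
def resW (S : SelfSimilarAction G X) : G → List X → G
  | g, [] => g
  | g, x :: v => S.resW (S.res g x) v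

theorem act_length (S : SelfSimilarAction G X) (g : G) (v : List X) :
    (S.act g v).length = v.length := by
  induction v generalizing g with
  | nil => simp [S.act_nil]
  | cons x w ih => simp [S.act_cons, ih]

theorem act_append (S : SelfSimilarAction G X) (g : G) (v w : List X) :
    S.act g (v ++ w) = S.act g v ++ S.act (S.resW g v) w := by
  induction v generalizing g with
  | nil => simp [S.act_nil, resW]
  | cons x v ih => simp [S.act_cons, resW, ih]

theorem resW_append (S : SelfSimilarAction G X) (g : G) (v w : List X) :
    S.resW g (v ++ w) = S.resW (S.resW g v) w := by
  induction v generalizing g with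
  | nil => simp [resW]
  | cons x v ih => simp [resW, ih]

theorem res_one (S : SelfSimilarAction G X) (x : X) : S.res 1 x = 1 := by
  apply S.faithful
  intro w
  have h := S.act_cons 1 x w
  rw [S.one_act] at h
  injection h with h1 h2
  rw [S.one_act]
  exact h2.symm

end SelfSimilarAction

open Filter

theorem aux_finite_len (X : Type*) [Fintype X] (n : ℕ) :
    Finite {l : List X // l.length = n} :=
  inferInstanceAs (Finite (List.Vector X n))

theorem aux_card_len (X : Type*) [Fintype X] (n : ℕ) :
    Nat.card {l : List X // l.length = n} = Fintype.card X ^ n := by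
  have h : Nat.card (List.Vector X n) = Fintype.card X ^ n := by
    rw [Nat.card_eq_fintype_card, card_vector]
  exact h


/-- For a self-similar action `(G,X)` and `g ≠ e`, with
`F_g^k = { v ∈ X^k : g·v = v and g|_v = e }`, the sequence `|X|^{-k}|F_g^k|` is
nondecreasing in `k` and converges to a limit `c_g` with `0 ≤ c_g < 1`. -/
theorem Fgk_monotone_tendsto {G X : Type*} [Group G] [Fintype X]
    (S : SelfSimilarAction G X) (g : G) (hg : g ≠ 1) :
    Monotone (fun k : ℕ =>
      (Nat.card {v : List X // v.length = k ∧ S.act g v = v ∧ S.resW g v = 1} : ℝ)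
        / (Fintype.card X : ℝ) ^ k) ∧
    ∃ c : ℝ, 0 ≤ c ∧ c < 1 ∧
      Tendsto (fun k : ℕ =>
        (Nat.card {v : List X // v.length = k ∧ S.act g v = v ∧ S.resW g v = 1} : ℝ)
          / (Fintype.card X : ℝ) ^ k) atTop (nhds c) := by
  classical
  -- a word moved by g
  obtain ⟨u, hu⟩ : ∃ w : List X, S.act g w ≠ w := by
    by_contra h
    push_neg at h
    exact hg (S.faithful g 1 (fun w => by rw [h w, S.one_act]))
  -- X is nonempty
  have hXne : Nonempty X := by
    cases u with
    | nil => exact absurd (S.act_nil g) hu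
    | cons x _ => exact ⟨x⟩
  have hq0 : (0:ℕ) < Fintype.card X := Fintype.card_pos
  have hq : (1:ℝ) ≤ (Fintype.card X : ℝ) := by exact_mod_cast hq0
  have hqpos : (0:ℝ) < (Fintype.card X : ℝ) := lt_of_lt_of_le one_pos hq
  set A := fun k : ℕ => {v : List X // v.length = k ∧ S.act g v = v ∧ S.resW g v = 1} with hAdef
  have finA : ∀ k, Finite (A k) := by
    intro k
    have := aux_finite_len X k
    apply Finite.of_injective (fun v : A k => (⟨v.1, v.2.1⟩ : {l : List X // l.length = k}))
    intro a b h
    simp only [Subtype.mk.injEq] at h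
    exact Subtype.ext h
  set f : ℕ → ℝ := fun k => (Nat.card (A k) : ℝ) / (Fintype.card X : ℝ) ^ k with hfdef
  -- monotone step: |F^{k+1}| ≥ |X| * |F^k|
  have key1 : ∀ k, Nat.card (A k) * Fintype.card X ≤ Nat.card (A (k+1)) := by
    intro k
    have := finA k; have := finA (k+1)
    have hinj : Function.Injective (fun p : A k × X =>
        (⟨p.1.1 ++ [p.2], by simp [p.1.2.1],
          by rw [S.act_append, p.1.2.2.1, p.1.2.2.2, S.one_act],
          by rw [S.resW_append, p.1.2.2.2]
             show S.resW (S.res 1 p.2) [] = 1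
             rw [S.res_one]; rfl⟩ : A (k+1))) := by
      rintro ⟨⟨v, hv⟩, x⟩ ⟨⟨w, hw⟩, y⟩ h
      have h' : v ++ [x] = w ++ [y] := congrArg Subtype.val h
      have hl : v.length = w.length := by rw [hv.1, hw.1]
      obtain ⟨h1, h2⟩ := List.append_inj h' hl
      simp only [List.cons.injEq] at h2
      simp [Prod.ext_iff, Subtype.ext_iff, h1, h2.1]
    have := Nat.card_le_card_of_injective _ hinj
    rwa [Nat.card_prod, Nat.card_eq_fintype_card (α := X)] at this
  have hmono : Monotone f := by
    apply monotone_nat_of_le_succ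
    intro k
    have h1 := key1 k
    have h1' : (Nat.card (A k) : ℝ) * (Fintype.card X : ℝ) ≤ (Nat.card (A (k+1)) : ℝ) := by
      exact_mod_cast h1
    simp only [hfdef]
    rw [div_le_div_iff₀ (by positivity) (by positivity), pow_succ]
    have hN : (0:ℝ) ≤ (Nat.card (A k) : ℝ) := Nat.cast_nonneg _
    have hp : (0:ℝ) ≤ (Fintype.card X : ℝ) ^ k := by positivity
    nlinarith
  -- upper bound: for k = u.length + j, |F^k| + |X|^j ≤ |X|^k
  have key2 : ∀ j, Nat.card (A (u.length + j)) + Fintype.card X ^ j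
      ≤ Fintype.card X ^ (u.length + j) := by
    intro j
    have := finA (u.length + j)
    have := aux_finite_len X (u.length + j)
    have := aux_finite_len X j
    have hinj : Function.Injective (fun p : A (u.length + j) ⊕ {l : List X // l.length = j} =>
        (Sum.elim (fun v : A (u.length + j) => (⟨v.1, v.2.1⟩ : {l : List X // l.length = u.length + j}))
          (fun w : {l : List X // l.length = j} =>
            (⟨u ++ w.1, by simp [w.2]⟩ : {l : List X // l.length = u.length + j})) p)) := by
      rintro (a | a) (b | b) h <;>
        simp only [Sum.elim_inl, Sum.elim_inr, Subtype.mk.injEq] at h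
      · exact congrArg Sum.inl (Subtype.ext h)
      · exfalso
        have hact : S.act g (u ++ b.1) = u ++ b.1 := h ▸ a.2.2.1
        rw [S.act_append] at hact
        exact hu (List.append_inj_left hact (S.act_length g u))
      · exfalso
        have hact : S.act g (u ++ a.1) = u ++ a.1 := h.symm ▸ b.2.2.1
        rw [S.act_append] at hact
        exact hu (List.append_inj_left hact (S.act_length g u))
      · exact congrArg Sum.inr (Subtype.ext (List.append_cancel_left h))
    have hle := Nat.card_le_card_of_injective _ hinj
    rwa [Nat.card_sum, aux_card_len, aux_card_len] at hle
  set B : ℝ := 1 - 1 / (Fintype.card X : ℝ) ^ u.length with hBdef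
  have hfB : ∀ k, f k ≤ B := by
    intro k
    have h1 : f k ≤ f (u.length + k) := hmono (Nat.le_add_left k u.length)
    refine h1.trans ?_
    have h2 : (Nat.card (A (u.length + k)) : ℝ) + (Fintype.card X : ℝ) ^ k
        ≤ (Fintype.card X : ℝ) ^ (u.length + k) := by exact_mod_cast key2 k
    simp only [hfdef, hBdef]
    rw [div_le_iff₀ (by positivity)]
    have he : (1 - 1 / (Fintype.card X : ℝ) ^ u.length) * (Fintype.card X : ℝ) ^ (u.length + k)
        = (Fintype.card X : ℝ) ^ (u.length + k) - (Fintype.card X : ℝ) ^ k := by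
      rw [sub_mul, one_mul, pow_add]
      field_simp
    rw [he]
    linarith
  have hB1 : B < 1 := by
    have : (0:ℝ) < 1 / (Fintype.card X : ℝ) ^ u.length := by positivity
    simp only [hBdef]; linarith
  refine ⟨hmono, ⨆ k, f k, ?_, ?_, ?_⟩
  · have h0 : (0:ℝ) ≤ f 0 := by positivity
    exact h0.trans (le_ciSup ⟨B, by rintro x ⟨k, rfl⟩; exact hfB k⟩ 0)
  · exact lt_of_le_of_lt (ciSup_le hfB) hB1
  · exact tendsto_atTop_ciSup hmono ⟨B, by rintro x ⟨k, rfl⟩; exact hfB k⟩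
end

section
/- Suppose A ∈ M_d(Z) is a dilation matrix (all complex eigenvalues λ satisfy |λ| > 1) with |det A| > 1. Then the associated self-similar action (Z^d, Σ) is contracting: there is a finite set S ⊆ Z^d such that for every n ∈ Z^d there exists N with n|_v ∈ S whenever |v| ≥ N. -/
open Matrix

open Filter Topology
open scoped Pointwise

theorem SelfSimilarAction.resW_eq_foldl {G X : Type*} [Group G] (S : SelfSimilarAction G X)
    (g : G) (v : List X) : S.resW g v = v.foldl S.res g := by
  induction v generalizing g with
  | nil => rfl
  | cons x v ih => exact ih _

theorem summable_norm_pow_of_spectrum_subset_ball {A : Type*} [NormedRing A] [NormedAlgebra ℂ A]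
    [CompleteSpace A] {a : A} (ha : spectrum ℂ a ⊆ Metric.ball 0 1) :
    Summable fun n ↦ ‖a ^ n‖ := by
  cases subsingleton_or_nontrivial A
  · simp [Subsingleton.elim _ (0 : A)]
  have hrad : spectralRadius ℂ a < (1 : NNReal) :=
    spectrum.spectralRadius_lt_of_forall_lt a fun z hz ↦ by simpa [← NNReal.coe_lt_one] using ha hz
  obtain ⟨ρ, hρa, hρ1⟩ := ENNReal.lt_iff_exists_nnreal_btwn.mp hrad
  -- Gelfand's formula: eventually `‖a ^ n‖ ^ (1 / n) < ρ`.
  have hpow : ∀ᶠ n in atTop, ‖‖a ^ n‖‖ ≤ (ρ : ℝ) ^ n := by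
    filter_upwards [(spectrum.pow_norm_pow_one_div_tendsto_nhds_spectralRadius a).eventually
      (gt_mem_nhds hρa), eventually_ne_atTop 0] with n hn hn0
    rw [ENNReal.ofReal_lt_iff_lt_toReal (by positivity) ENNReal.coe_ne_top, one_div,
      ENNReal.coe_toReal] at hn
    rw [norm_norm, ← Real.rpow_inv_natCast_pow (norm_nonneg (a ^ n)) hn0]
    exact pow_le_pow_left₀ (by positivity) hn.le n
  exact .of_norm_bounded_eventually_nat (summable_geometric_of_lt_one ρ.2 (mod_cast hρ1)) hpow

section AffineIteration

variable {𝕜 E α X : Type*} [NontriviallyNormedField 𝕜] [NormedAddCommGroup E] [NormedSpace 𝕜 E]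

theorem exists_foldl_eq_pow_add (L : E →L[𝕜] E) (φ : α → E) {f : α → X → α} {R : ℝ}
    (hf : ∀ g x, ∃ δ, ‖δ‖ ≤ R ∧ φ (f g x) = L (φ g + δ)) (v : List X) (g : α) :
    ∃ w, φ (v.foldl f g) = (L ^ v.length) (φ g) + w ∧
      ‖w‖ ≤ R * ∑ j ∈ Finset.range v.length, ‖L ^ (j + 1)‖ := by
  induction v generalizing g with
  | nil => exact ⟨0, by simp, by simp⟩
  | cons x v ih =>
    obtain ⟨δ, hδ, hstep⟩ := hf g x
    obtain ⟨w, hw, hwR⟩ := ih (f g x)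
    refine ⟨(L ^ (v.length + 1)) δ + w, ?_, ?_⟩
    · rw [List.foldl_cons, hw, hstep, ← mul_apply_eq_comp, ← pow_succ, map_add,
        add_assoc, List.length_cons]
    · calc ‖(L ^ (v.length + 1)) δ + w‖
          ≤ ‖L ^ (v.length + 1)‖ * R + R * ∑ j ∈ Finset.range v.length, ‖L ^ (j + 1)‖ :=
            norm_add_le_of_le ((L ^ _).le_opNorm_of_le hδ) hwR
        _ = R * ∑ j ∈ Finset.range (x :: v).length, ‖L ^ (j + 1)‖ := by
            rw [List.length_cons, Finset.sum_range_succ]; ring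

theorem exists_finite_forall_foldl_mem (L : E →L[𝕜] E) (hL : Summable fun n ↦ ‖L ^ n‖)
    {φ : α → E} (hφ : ∀ r, {g | ‖φ g‖ ≤ r}.Finite) {f : α → X → α} {D : Set E}
    (hD : Bornology.IsBounded D) (hf : ∀ g x, ∃ δ ∈ D, φ (f g x) = L (φ g + δ)) :
    ∃ T : Set α, T.Finite ∧ ∀ g, ∃ N : ℕ, ∀ v : List X, N ≤ v.length → v.foldl f g ∈ T := by
  obtain ⟨R, hR0, hR⟩ := hD.exists_pos_norm_le
  have hfR : ∀ g x, ∃ δ, ‖δ‖ ≤ R ∧ φ (f g x) = L (φ g + δ) := fun g x ↦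
    let ⟨δ, hδ, h⟩ := hf g x; ⟨δ, hR δ hδ, h⟩
  refine ⟨{g | ‖φ g‖ ≤ 1 + R * ∑' j, ‖L ^ (j + 1)‖}, hφ _, fun g ↦ ?_⟩
  have hdecay : Tendsto (fun n ↦ ‖L ^ n‖ * ‖φ g‖) atTop (𝓝 0) := by
    simpa using hL.tendsto_atTop_zero.mul_const ‖φ g‖
  obtain ⟨N, hN⟩ := eventually_atTop.1 (hdecay.eventually (gt_mem_nhds one_pos))
  refine ⟨N, fun v hv ↦ ?_⟩
  obtain ⟨w, hw, hwR⟩ := exists_foldl_eq_pow_add L φ hfR v g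
  have hsum : ∑ j ∈ Finset.range v.length, ‖L ^ (j + 1)‖ ≤ ∑' j, ‖L ^ (j + 1)‖ :=
    ((summable_nat_add_iff 1).2 hL).sum_le_tsum _ fun j _ ↦ norm_nonneg _
  calc ‖φ (v.foldl f g)‖
      ≤ ‖L ^ v.length‖ * ‖φ g‖ + R * ∑ j ∈ Finset.range v.length, ‖L ^ (j + 1)‖ :=
        hw ▸ norm_add_le_of_le ((L ^ _).le_opNorm _) hwR
    _ ≤ 1 + R * ∑' j, ‖L ^ (j + 1)‖ :=
        add_le_add (hN _ hv).le (mul_le_mul_of_nonneg_left hsum hR0.le)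

end AffineIteration

theorem Matrix.finite_quotient_range_mulVecLin {n : Type*} [Fintype n] [DecidableEq n]
    {B : Matrix n n ℤ} (hB : B.det ≠ 0) : Finite ((n → ℤ) ⧸ LinearMap.range B.mulVecLin) := by
  refine Module.finite_of_fg_torsion _ fun x ↦ ?_
  obtain ⟨v, rfl⟩ := Submodule.Quotient.mk_surjective _ x
  refine ⟨⟨B.det, mem_nonZeroDivisors_of_ne_zero hB⟩, ?_⟩
  -- `det B • v = B *ᵥ (adj B *ᵥ v)`
  have hmem : B.det • v ∈ LinearMap.range B.mulVecLin :=
    ⟨B.adjugate *ᵥ v, by simp [mulVec_mulVec, mul_adjugate]⟩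
  simpa [← Submodule.Quotient.mk_smul, Submodule.Quotient.mk_eq_zero] using hmem

theorem Matrix.finite_of_eq_of_sub_eq_mulVec {n : Type*} [Fintype n] [DecidableEq n]
    {B : Matrix n n ℤ} (hB : B.det ≠ 0) {s : Set (n → ℤ)}
    (hs : ∀ x ∈ s, ∀ y ∈ s, (∃ u, B *ᵥ u = x - y) → x = y) : s.Finite := by
  have := finite_quotient_range_mulVecLin hB
  refine (Set.toFinite _).of_finite_image
    (f := Submodule.Quotient.mk (p := LinearMap.range B.mulVecLin)) fun x hx y hy hxy ↦ ?_
  exact hs x hx y hy ((Submodule.Quotient.eq _).mp hxy)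

theorem Matrix.norm_lt_one_of_mem_spectrum_inv {n : Type*} [Fintype n] [DecidableEq n]
    {M : Matrix n n ℂ} (hM : IsUnit M.det) (hroots : ∀ z, M.charpoly.IsRoot z → 1 < ‖z‖)
    {z : ℂ} (hz : z ∈ spectrum ℂ M⁻¹) : ‖z‖ < 1 := by
  lift M to (Matrix n n ℂ)ˣ using M.isUnit_iff_isUnit_det.mpr hM
  rw [← coe_units_inv, ← spectrum.inv₀_mem_iff, mem_spectrum_iff_isRoot_charpoly] at hz
  have h := hroots _ hz
  rw [norm_inv] at h
  have hz0 : z ≠ 0 := by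
    rintro rfl
    norm_num at h
  exact (one_lt_inv₀ (norm_pos_iff.mpr hz0)).mp h

theorem Matrix.summable_norm_pow_toEuclideanCLM_inv {n : Type*} [Fintype n] [DecidableEq n]
    {M : Matrix n n ℂ} (hM : IsUnit M.det) (hroots : ∀ z, M.charpoly.IsRoot z → 1 < ‖z‖) :
    Summable fun k ↦ ‖toEuclideanCLM (𝕜 := ℂ) M⁻¹ ^ k‖ := by
  refine summable_norm_pow_of_spectrum_subset_ball fun z hz ↦ ?_
  rw [AlgEquiv.spectrum_eq] at hz
  exact mem_ball_zero_iff.mpr (norm_lt_one_of_mem_spectrum_inv hM hroots hz)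

def intVecToEuclidean (n : Type*) : (n → ℤ) →+ EuclideanSpace ℂ n :=
  ((WithLp.linearEquiv 2 ℂ (n → ℂ)).symm : (n → ℂ) →+ EuclideanSpace ℂ n).comp
    ((Int.castAddHom ℂ).compLeft n)

@[simp]
theorem intVecToEuclidean_apply {n : Type*} (v : n → ℤ) (i : n) :
    intVecToEuclidean n v i = v i :=
  rfl

theorem finite_setOf_norm_intVecToEuclidean_le {n : Type*} [Fintype n] (r : ℝ) :
    {v : n → ℤ | ‖intVecToEuclidean n v‖ ≤ r}.Finite := by
  refine (isCompact_closedBall (0 : n → ℤ) r).finite_of_discrete.subset fun v hv ↦ ?_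
  rw [mem_closedBall_zero_iff, pi_norm_le_iff_of_nonneg ((norm_nonneg _).trans hv)]
  intro i
  calc ‖v i‖ = ‖intVecToEuclidean n v i‖ := by simp [Int.norm_eq_abs, Complex.norm_intCast]
    _ ≤ r := (PiLp.norm_apply_le _ i).trans hv

theorem toEuclideanCLM_inv_intVecToEuclidean_mulVec {n : Type*} [Fintype n] [DecidableEq n]
    {B : Matrix n n ℤ} (hB : B.det ≠ 0) (u : n → ℤ) :
    toEuclideanCLM (𝕜 := ℂ) (B.map (Int.cast : ℤ → ℂ))⁻¹ (intVecToEuclidean n (B *ᵥ u)) =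
      intVecToEuclidean n u := by
  have hunit : IsUnit (B.map (Int.cast : ℤ → ℂ)).det := by
    rw [← Int.cast_det, isUnit_iff_ne_zero]
    exact_mod_cast hB
  have hcast : intVecToEuclidean n (B *ᵥ u) =
      WithLp.toLp 2 (B.map (Int.cast : ℤ → ℂ) *ᵥ fun i ↦ (u i : ℂ)) := by
    ext i
    exact RingHom.map_mulVec (Int.castRingHom ℂ) B u i
  rw [hcast, toEuclideanCLM_toLp, mulVec_mulVec, nonsing_inv_mul _ hunit, one_mulVec]
  rfl

theorem dilation_contracting_general {d : ℕ} (A : Matrix (Fin d) (Fin d) ℤ)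
    (hA : 1 < |A.det|)
    (hdil : ∀ z : ℂ, (A.map (Int.cast : ℤ → ℂ)).charpoly.IsRoot z → 1 < ‖z‖)
    (Sig : Set (Fin d → ℤ))
    (c : (Fin d → ℤ) → (Fin d → ℤ))
    (hc_mem : ∀ m, c m ∈ Sig)
    (hc_unique : ∀ m s, s ∈ Sig → (∃ u : (Fin d → ℤ), Aᵀ.mulVec u = m - s) → s = c m)
    (S : SelfSimilarAction (Multiplicative (Fin d → ℤ)) Sig)
    (hS : ∀ (n : Fin d → ℤ) (x : Sig),
        (S.actX (Multiplicative.ofAdd n) x : Fin d → ℤ) = c (n + (x : Fin d → ℤ)) ∧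
        Aᵀ.mulVec (Multiplicative.toAdd (S.res (Multiplicative.ofAdd n) x))
          = n + (x : Fin d → ℤ) - c (n + (x : Fin d → ℤ))) :
    ∃ T : Set (Fin d → ℤ), T.Finite ∧
      ∀ n : Fin d → ℤ, ∃ N : ℕ, ∀ v : List Sig, N ≤ v.length →
        Multiplicative.toAdd (S.resW (Multiplicative.ofAdd n) v) ∈ T := by
  have hdet : Aᵀ.det ≠ 0 := by
    rw [det_transpose]
    rintro h
    simp [h] at hA
  have hSig : Sig.Finite := finite_of_eq_of_sub_eq_mulVec hdet fun s hs t ht hst ↦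
    (hc_unique s s hs ⟨0, by simp⟩).trans (hc_unique s t ht hst).symm
  set ι := intVecToEuclidean (Fin d)
  set L := toEuclideanCLM (𝕜 := ℂ) (Aᵀ.map (Int.cast : ℤ → ℂ))⁻¹
  have hL : Summable fun n ↦ ‖L ^ n‖ := by
    refine summable_norm_pow_toEuclideanCLM_inv ?_ fun z hz ↦ hdil z ?_
    · rw [← Int.cast_det, isUnit_iff_ne_zero]
      exact_mod_cast hdet
    · rwa [transpose_map, charpoly_transpose] at hz
  have hstep : ∀ g x, ∃ δ ∈ ι '' (Sig - Sig),
      ι (S.res g x).toAdd = L (ι g.toAdd + δ) := fun g x ↦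
    ⟨_, Set.mem_image_of_mem ι (Set.sub_mem_sub x.2 (hc_mem (g.toAdd + x))), by
      rw [← map_add, ← add_sub_assoc, ← (hS g.toAdd x).2,
        toEuclideanCLM_inv_intVecToEuclidean_mulVec hdet]
      rfl⟩
  have hι : ∀ r, {g : Multiplicative (Fin d → ℤ) | ‖ι g.toAdd‖ ≤ r}.Finite := fun r ↦
    (finite_setOf_norm_intVecToEuclidean_le r).preimage Multiplicative.toAdd.injective.injOn
  obtain ⟨T, hT, hmem⟩ :=
    exists_finite_forall_foldl_mem L hL hι ((hSig.sub hSig).image ι).isBounded hstep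
  refine ⟨Multiplicative.toAdd '' T, hT.image _, fun n ↦ ?_⟩
  obtain ⟨N, hN⟩ := hmem (Multiplicative.ofAdd n)
  exact ⟨N, fun v hv ↦ ⟨_, S.resW_eq_foldl _ v ▸ hN v hv, rfl⟩⟩

/-- If `A` is an integer dilation matrix (all complex eigenvalues `λ` satisfy `|λ| > 1`)
with `|det A| > 1`, then the associated self-similar action `(ℤ^d, Σ)` is contracting:
there is a finite set `T ⊆ ℤ^d` such that for every `n ∈ ℤ^d` there exists `N` with
`n|_v ∈ T` whenever `|v| ≥ N`. -/
theorem dilation_contracting {d : ℕ} (A : Matrix (Fin d) (Fin d) ℤ)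
    (hA : 1 < |A.det|)
    (hdil : ∀ z : ℂ, (A.map (Int.cast : ℤ → ℂ)).charpoly.IsRoot z → 1 < ‖z‖)
    (Sig : Set (Fin d → ℤ)) (hSig0 : (0 : Fin d → ℤ) ∈ Sig)
    (c : (Fin d → ℤ) → (Fin d → ℤ))
    (hc_mem : ∀ m, c m ∈ Sig)
    (hc_coset : ∀ m, ∃ u : (Fin d → ℤ), Aᵀ.mulVec u = m - c m)
    (hc_unique : ∀ m s, s ∈ Sig → (∃ u : (Fin d → ℤ), Aᵀ.mulVec u = m - s) → s = c m)
    (S : SelfSimilarAction (Multiplicative (Fin d → ℤ)) Sig)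
    (hS : ∀ (n : Fin d → ℤ) (x : Sig),
        (S.actX (Multiplicative.ofAdd n) x : Fin d → ℤ) = c (n + (x : Fin d → ℤ)) ∧
        Aᵀ.mulVec (Multiplicative.toAdd (S.res (Multiplicative.ofAdd n) x))
          = n + (x : Fin d → ℤ) - c (n + (x : Fin d → ℤ))) :
    ∃ T : Set (Fin d → ℤ), T.Finite ∧
      ∀ n : Fin d → ℤ, ∃ N : ℕ, ∀ v : List Sig, N ≤ v.length →
        Multiplicative.toAdd (S.resW (Multiplicative.ofAdd n) v) ∈ T :=
  dilation_contracting_general A hA hdil Sig c hc_mem hc_unique S hS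
end
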